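/- The 3-dimensional Heisenberg Lie algebra 𝔫₃(ℂ) (brackets [w₂,w₃] = w₁) has no nontrivial contractions: any contraction of it via a family of automorphisms yields either the abelian Lie algebra or a Lie algebra isomorphic to 𝔫₃(ℂ) itself. -/

import Mathlib

/- STATEMENT 15: The 3-dimensional Heisenberg algebra `𝔫₃(ℂ)` (only nonzero bracket
`[w₂,w₃] = w₁`) has no nontrivial contractions: for any family `g_t` of automorphisms
of `ℂ³`, if the limit `lim_{t→0} g_t*(𝔫₃)` exists (pointwise, with
`g_t*(d)(x,y) = g_t⁻¹ [g_t x, g_t y]`), then the limit bracket is either the abelian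
one or a Lie algebra isomorphic to `𝔫₃(ℂ)` itself. -/

open Filter Topology

/-- The Heisenberg bracket on `ℂ³`: `[w₂,w₃] = w₁`. -/
def n3 (x y : Fin 3 → ℂ) : Fin 3 → ℂ :=
  ![x 1 * y 2 - x 2 * y 1, 0, 0]


lemma n3_add_left (x x' y : Fin 3 → ℂ) : n3 (x + x') y = n3 x y + n3 x' y := by
  funext i; fin_cases i <;> simp [n3] <;> ring

lemma n3_smul_left (c : ℂ) (x y : Fin 3 → ℂ) : n3 (c • x) y = c • n3 x y := by
  funext i; fin_cases i <;> simp [n3] <;> ring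

lemma n3_add_right (x y y' : Fin 3 → ℂ) : n3 x (y + y') = n3 x y + n3 x y' := by
  funext i; fin_cases i <;> simp [n3] <;> ring

lemma n3_smul_right (c : ℂ) (x y : Fin 3 → ℂ) : n3 x (c • y) = c • n3 x y := by
  funext i; fin_cases i <;> simp [n3] <;> ring

lemma n3_self (x : Fin 3 → ℂ) : n3 x x = 0 := by
  funext i; fin_cases i <;> simp [n3] <;> ring

lemma n3_antisymm (x y : Fin 3 → ℂ) : n3 y x = - n3 x y := by
  funext i; fin_cases i <;> simp [n3] <;> ring

lemma n3_n3 (x y z : Fin 3 → ℂ) : n3 (n3 x y) z = 0 := by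
  funext i; fin_cases i <;> simp [n3]

noncomputable def mu (g : ℂ → ((Fin 3 → ℂ) ≃ₗ[ℂ] (Fin 3 → ℂ))) (t : ℂ) :
    (Fin 3 → ℂ) →ₗ[ℂ] (Fin 3 → ℂ) →ₗ[ℂ] (Fin 3 → ℂ) :=
  LinearMap.mk₂ ℂ (fun x y => (g t).symm (n3 (g t x) (g t y)))
    (fun x x' y => by rw [map_add, n3_add_left, map_add])
    (fun c x y => by rw [map_smul, n3_smul_left, map_smul])
    (fun x y y' => by rw [map_add, n3_add_right, map_add])
    (fun c x y => by rw [map_smul, n3_smul_right, map_smul])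

lemma mu_apply (g : ℂ → ((Fin 3 → ℂ) ≃ₗ[ℂ] (Fin 3 → ℂ))) (t : ℂ) (x y : Fin 3 → ℂ) :
    mu g t x y = (g t).symm (n3 (g t x) (g t y)) := rfl

lemma pi_expand (x : Fin 3 → ℂ) : x = ∑ i : Fin 3, x i • (Pi.single i 1 : Fin 3 → ℂ) := by
  funext j
  simp [Finset.sum_apply, Pi.single_apply]

lemma mu_tendsto (g : ℂ → ((Fin 3 → ℂ) ≃ₗ[ℂ] (Fin 3 → ℂ)))
    (L : (Fin 3 → ℂ) →ₗ[ℂ] (Fin 3 → ℂ) →ₗ[ℂ] (Fin 3 → ℂ))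
    (hlim : ∀ x y, Tendsto (fun t => mu g t x y) (𝓝[≠] (0:ℂ)) (𝓝 (L x y)))
    (a : ℂ → Fin 3 → ℂ) (av : Fin 3 → ℂ) (ha : Tendsto a (𝓝[≠] (0:ℂ)) (𝓝 av))
    (z : Fin 3 → ℂ) :
    Tendsto (fun t => mu g t (a t) z) (𝓝[≠] (0:ℂ)) (𝓝 (L av z)) := by
  have expand : ∀ (M : (Fin 3 → ℂ) →ₗ[ℂ] (Fin 3 → ℂ) →ₗ[ℂ] (Fin 3 → ℂ)) (w : Fin 3 → ℂ),
      M w z = ∑ i : Fin 3, w i • M (Pi.single i 1) z := by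
    intro M w
    conv_lhs => rw [pi_expand w]
    rw [map_sum]
    simp [LinearMap.sum_apply]
  have h1 : ∀ t, mu g t (a t) z = ∑ i : Fin 3, a t i • mu g t (Pi.single i 1) z :=
    fun t => expand _ _
  have h2 : L av z = ∑ i : Fin 3, av i • L (Pi.single i 1) z := expand _ _
  simp only [h1]
  rw [h2]
  exact tendsto_finset_sum _ fun i _ =>
    ((tendsto_pi_nhds.mp ha i).smul (hlim (Pi.single i 1) z))

theorem n3_no_nontrivial_contractions
    (g : ℂ → ((Fin 3 → ℂ) ≃ₗ[ℂ] (Fin 3 → ℂ)))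
    (L : (Fin 3 → ℂ) →ₗ[ℂ] (Fin 3 → ℂ) →ₗ[ℂ] (Fin 3 → ℂ))
    (hlim : ∀ x y, Tendsto (fun t : ℂ => (g t).symm (n3 (g t x) (g t y)))
      (𝓝[≠] (0 : ℂ)) (𝓝 (L x y))) :
    (∀ x y, L x y = 0)
      ∨ ∃ h : (Fin 3 → ℂ) ≃ₗ[ℂ] (Fin 3 → ℂ),
          ∀ x y, h (L x y) = n3 (h x) (h y) := by
  classical
  have hlim' : ∀ x y, Tendsto (fun t => mu g t x y) (𝓝[≠] (0:ℂ)) (𝓝 (L x y)) := hlim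
  -- L x x = 0
  have hself : ∀ x, L x x = 0 := by
    intro x
    refine tendsto_nhds_unique (hlim' x x) ?_
    have : (fun t : ℂ => mu g t x x) = fun _ => (0 : Fin 3 → ℂ) := by
      funext t; rw [mu_apply, n3_self, map_zero]
    rw [this]; exact tendsto_const_nhds
  -- antisymmetry
  have hanti : ∀ x y, L y x = - L x y := by
    intro x y
    refine tendsto_nhds_unique (hlim' y x) ?_
    have : (fun t : ℂ => mu g t y x) = fun t => -(mu g t x y) := by
      funext t; rw [mu_apply, mu_apply, n3_antisymm, map_neg]
    rw [this]; exact (hlim' x y).neg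
  -- nilpotency
  have hnil : ∀ x y z, L (L x y) z = 0 := by
    intro x y z
    have h1 := mu_tendsto g L hlim' (fun t => mu g t x y) (L x y) (hlim' x y) z
    have h2 : (fun t : ℂ => mu g t (mu g t x y) z) = fun _ => (0 : Fin 3 → ℂ) := by
      funext t
      show (g t).symm (n3 ((g t) ((g t).symm (n3 ((g t) x) ((g t) y)))) ((g t) z)) = 0
      rw [LinearEquiv.apply_symm_apply, n3_n3, map_zero]
    rw [h2] at h1
    exact tendsto_nhds_unique h1 tendsto_const_nhds
  by_cases hz : ∀ x y, L x y = 0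
  · exact Or.inl hz
  right
  push_neg at hz
  obtain ⟨x₀, y₀, hv⟩ := hz
  set v := L x₀ y₀ with hvdef
  have hLv : ∀ z, L v z = 0 := fun z => hnil x₀ y₀ z
  have hLv' : ∀ z, L z v = 0 := fun z => by rw [hanti v z, hLv, neg_zero]
  -- linear independence of v, x₀, y₀
  have li : LinearIndependent ℂ ![v, x₀, y₀] := by
    rw [Fintype.linearIndependent_iff]
    intro c hc
    have hc' : c 0 • v + c 1 • x₀ + c 2 • y₀ = 0 := by
      have := hc
      rw [Fin.sum_univ_three] at this
      simpa using this
    have hb : c 1 = 0 := by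
      have h1 := congrArg (fun w => L w y₀) hc'
      simp only [map_add, map_smul, LinearMap.add_apply, LinearMap.smul_apply,
        LinearMap.zero_apply, LinearMap.map_zero] at h1
      rw [hLv, hself, ← hvdef] at h1
      simp only [smul_zero, add_zero, zero_add] at h1
      rcases smul_eq_zero.mp h1 with h | h
      · exact h
      · exact absurd h hv
    have hcc : c 2 = 0 := by
      have h1 := congrArg (fun w => L x₀ w) hc'
      simp only [map_add, map_smul, LinearMap.map_zero] at h1
      rw [hLv', hself, ← hvdef] at h1
      simp only [smul_zero, add_zero, zero_add] at h1
      rcases smul_eq_zero.mp h1 with h | h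
      · exact h
      · exact absurd h hv
    have ha : c 0 = 0 := by
      rw [hb, hcc] at hc'
      simp only [zero_smul, add_zero] at hc'
      rcases smul_eq_zero.mp hc' with h | h
      · exact h
      · exact absurd h hv
    intro i; fin_cases i <;> assumption
  have card_eq : Fintype.card (Fin 3) = Module.finrank ℂ (Fin 3 → ℂ) := by simp
  let B := basisOfLinearIndependentOfCardEqFinrank li card_eq
  have hB : ⇑B = ![v, x₀, y₀] := coe_basisOfLinearIndependentOfCardEqFinrank li card_eq
  have hB0 : B 0 = v := by rw [hB]; rfl
  have hB1 : B 1 = x₀ := by rw [hB]; rfl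
  have hB2 : B 2 = y₀ := by rw [hB]; rfl
  set h := B.equiv (Pi.basisFun ℂ (Fin 3)) (Equiv.refl _) with hhdef
  have hhB : ∀ i, h (B i) = Pi.single i 1 := by
    intro i
    rw [hhdef, Module.Basis.equiv_apply]
    simp [Pi.basisFun_apply]
  -- representation
  have hrep : ∀ x : Fin 3 → ℂ, x = B.repr x 0 • v + B.repr x 1 • x₀ + B.repr x 2 • y₀ := by
    intro x
    have := B.sum_repr x
    rw [Fin.sum_univ_three, hB0, hB1, hB2] at this
    linear_combination (norm := module) -this
  -- compute L x y
  have hLxy : ∀ x y, L x y = (B.repr x 1 * B.repr y 2 - B.repr x 2 * B.repr y 1) • v := by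
    intro x y
    conv_lhs => rw [hrep x, hrep y]
    have hyx : L y₀ x₀ = -v := by rw [hanti x₀ y₀, hvdef]
    simp only [map_add, map_smul, LinearMap.add_apply, LinearMap.smul_apply,
      hLv, hLv', hself, hyx, ← hvdef, smul_zero, zero_add, add_zero, smul_neg]
    module
  have hcomp : ∀ (x : Fin 3 → ℂ) (j : Fin 3), h x j = B.repr x j := by
    intro x j
    conv_lhs => rw [hrep x, ← hB0, ← hB1, ← hB2]
    simp only [map_add, map_smul, hhB]
    fin_cases j <;>
      simp [Pi.single_apply]
  refine ⟨h, fun x y => ?_⟩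
  rw [hLxy x y]
  funext j
  rw [map_smul]
  have hhv : h v = Pi.single 0 1 := by rw [← hB0, hhB]
  rw [hhv]
  fin_cases j <;>
    simp [n3, hcomp, Pi.single_apply] <;> ring
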